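/- arXiv:2408.00519 — 3 statements merged into one kernel-verified Lean document; each statement's English description precedes it below -/
import Mathlib

section
/- Let α > 0, ν, b and ζ₀, ζ₁, ζ₂, ζ₃ be real numbers with ζ₁ > 0. Assume the tilt-slope condition ζ₂ − (α²/2)ζ₀ = ν·ζ₁ and the generalized Bogomolov–Gieseker inequality α²(ζ₁² − 2ζ₀ζ₂) + 4ζ₂² − 6ζ₁ζ₃ ≥ 0. Then (ζ₃ − b·ζ₂)/ζ₁ ≤ α²/6 + (2ν/3 − b)·(ζ₂/ζ₁). -/
theorem psi_bound_key_step (α ν b ζ₀ ζ₁ ζ₂ ζ₃ : ℝ) (hα : 0 < α) (hζ₁ : 0 < ζ₁)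
    (hslope : ζ₂ - (α ^ 2 / 2) * ζ₀ = ν * ζ₁)
    (hBG : α ^ 2 * (ζ₁ ^ 2 - 2 * ζ₀ * ζ₂) + 4 * ζ₂ ^ 2 - 6 * ζ₁ * ζ₃ ≥ 0) :
    (ζ₃ - b * ζ₂) / ζ₁ ≤ α ^ 2 / 6 + (2 * ν / 3 - b) * (ζ₂ / ζ₁) := by
  have h : α ^ 2 / 6 + (2 * ν / 3 - b) * (ζ₂ / ζ₁)
      = (α ^ 2 / 6 * ζ₁ + (2 * ν / 3 - b) * ζ₂) / ζ₁ := by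
    field_simp
  rw [h, div_le_div_iff₀ hζ₁ hζ₁]
  have h2 := congrArg (· * ζ₂) hslope
  nlinarith [hBG, h2]
end

section
/- Let α > 0 and b be real numbers, and let ζ₀, ζ₁, ζ₂, ζ₃ be real numbers with ζ₁ > 0 satisfying: (i) ζ₂ = (α²/2)ζ₀ (the ν = 0 condition), (ii) the classical Bogomolov inequality ζ₁² − 2ζ₀ζ₂ ≥ 0, and (iii) the generalized Bogomolov–Gieseker inequality α²(ζ₁² − 2ζ₀ζ₂) + 4ζ₂² − 6ζ₁ζ₃ ≥ 0. Then ζ₃ − b·ζ₂ ≤ (α²/6 + (α/2)|b|)·ζ₁. -/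
/-! On the wall `ζ₂ = (α²/2) ζ₀` the two `ζ₂`-terms of the generalized Bogomolov–Gieseker
expression cancel, leaving `α² ζ₁² - 6 ζ₁ ζ₃ ≥ 0`, i.e. `ζ₃ ≤ (α²/6) ζ₁`; and the classical
Bogomolov inequality becomes `(α ζ₀)² ≤ ζ₁²`, i.e. `|ζ₂| ≤ (α/2) ζ₁`, which controls `-b ζ₂`. -/

lemma le_of_bogomolovGieseker_of_nu_eq_zero {α ζ₀ ζ₁ ζ₂ ζ₃ : ℝ} (hζ₁ : 0 < ζ₁)
    (hν : ζ₂ = (α ^ 2 / 2) * ζ₀)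
    (hBG : α ^ 2 * (ζ₁ ^ 2 - 2 * ζ₀ * ζ₂) + 4 * ζ₂ ^ 2 - 6 * ζ₁ * ζ₃ ≥ 0) :
    ζ₃ ≤ α ^ 2 / 6 * ζ₁ := by
  have h : ζ₁ * ζ₃ ≤ ζ₁ * (α ^ 2 / 6 * ζ₁) := by
    subst hν
    linarith
  exact le_of_mul_le_mul_left h hζ₁

lemma abs_le_of_bogomolov_of_nu_eq_zero {α ζ₀ ζ₁ ζ₂ : ℝ} (hα : 0 ≤ α) (hζ₁ : 0 ≤ ζ₁)
    (hν : ζ₂ = (α ^ 2 / 2) * ζ₀) (hBog : ζ₁ ^ 2 - 2 * ζ₀ * ζ₂ ≥ 0) :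
    |ζ₂| ≤ α / 2 * ζ₁ := by
  refine abs_le_of_sq_le_sq ?_ (by positivity)
  have hsq : (α / 2 * ζ₁) ^ 2 - ζ₂ ^ 2 = α ^ 2 / 4 * (ζ₁ ^ 2 - 2 * ζ₀ * ζ₂) := by
    subst hν
    ring
  linarith [mul_nonneg (by positivity : (0 : ℝ) ≤ α ^ 2 / 4) hBog]

theorem psi_le_potier_bound (α b ζ₀ ζ₁ ζ₂ ζ₃ : ℝ) (hα : 0 < α) (hζ₁ : 0 < ζ₁)
    (hν : ζ₂ = (α ^ 2 / 2) * ζ₀)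
    (hBog : ζ₁ ^ 2 - 2 * ζ₀ * ζ₂ ≥ 0)
    (hBG : α ^ 2 * (ζ₁ ^ 2 - 2 * ζ₀ * ζ₂) + 4 * ζ₂ ^ 2 - 6 * ζ₁ * ζ₃ ≥ 0) :
    ζ₃ - b * ζ₂ ≤ (α ^ 2 / 6 + (α / 2) * |b|) * ζ₁ := by
  have hζ₃ : ζ₃ ≤ α ^ 2 / 6 * ζ₁ := le_of_bogomolovGieseker_of_nu_eq_zero hζ₁ hν hBG
  have hζ₂ : |ζ₂| ≤ α / 2 * ζ₁ := abs_le_of_bogomolov_of_nu_eq_zero hα.le hζ₁.le hν hBog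
  have hbζ₂ : -(b * ζ₂) ≤ |b| * (α / 2 * ζ₁) :=
    calc -(b * ζ₂) ≤ |b * ζ₂| := neg_le_abs _
      _ = |b| * |ζ₂| := abs_mul b ζ₂
      _ ≤ |b| * (α / 2 * ζ₁) := mul_le_mul_of_nonneg_left hζ₂ (abs_nonneg b)
  linarith
end

section
/- Let α > 0, c ≥ 0 and a, b be real numbers with a ≥ α²/6 + (α/2)|b|. Let ζ₀, ζ₁, ζ₂, ζ₃ be real numbers satisfying ((α² + 6a)/2)(ζ₁² − 2ζ₀ζ₂) + 4ζ₂² − 6ζ₁ζ₃ ≥ 0. Then c·ζ₂² − (ac + (α²c/2))·ζ₀ζ₂ + (α²bc/2)·ζ₀ζ₁ + (α²ac/2)·ζ₀² − c·ζ₁ζ₃ + ac·ζ₁² ≥ 0. -/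
/-!
Dividing by `c ≥ 0`, let `T` be the remaining quadratic form in `ζ`. Then
`6 T = Q + (2ζ₂ - α²ζ₀)² / 2 + k ((αζ₀)² + ζ₁²) + 3α b (αζ₀) ζ₁` with `k = 3a - α²/2`, where `Q ≥ 0`
is the Bayer–Macrì–Stellari form. The last binary form is nonnegative because the bound on `a`
says exactly `k ≥ |3α b / 2|`.
-/

theorem mul_add_sq_add_two_mul_nonneg_of_abs_le {k m : ℝ} (h : |m| ≤ k) (u v : ℝ) :
    0 ≤ k * (u ^ 2 + v ^ 2) + 2 * m * u * v := by
  have huv : 2 * |u * v| ≤ u ^ 2 + v ^ 2 := by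
    rw [abs_mul]
    nlinarith [sq_nonneg (|u| - |v|), sq_abs u, sq_abs v]
  have hmuv : -(m * (u * v)) ≤ |m| * |u * v| := by
    rw [← abs_mul]
    exact neg_le_abs _
  nlinarith [abs_nonneg m, abs_nonneg (u * v)]

theorem ImZprime_nonneg (α c a b ζ₀ ζ₁ ζ₂ ζ₃ : ℝ) (hα : 0 < α) (hc : 0 ≤ c)
    (ha : a ≥ α ^ 2 / 6 + (α / 2) * |b|)
    (hQ : ((α ^ 2 + 6 * a) / 2) * (ζ₁ ^ 2 - 2 * ζ₀ * ζ₂) + 4 * ζ₂ ^ 2 - 6 * ζ₁ * ζ₃ ≥ 0) :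
    c * ζ₂ ^ 2 - (a * c + α ^ 2 * c / 2) * ζ₀ * ζ₂ + (α ^ 2 * b * c / 2) * ζ₀ * ζ₁ +
      (α ^ 2 * a * c / 2) * ζ₀ ^ 2 - c * ζ₁ * ζ₃ + a * c * ζ₁ ^ 2 ≥ 0 := by
  have hm : |3 * α * b / 2| ≤ 3 * a - α ^ 2 / 2 := by
    rw [abs_div, abs_mul, abs_of_pos (by linarith : (0 : ℝ) < 3 * α), abs_two]
    linarith
  have hR := mul_add_sq_add_two_mul_nonneg_of_abs_le hm (α * ζ₀) ζ₁
  have hT : 0 ≤ ζ₂ ^ 2 - (a + α ^ 2 / 2) * ζ₀ * ζ₂ + (α ^ 2 * b / 2) * ζ₀ * ζ₁ +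
      (α ^ 2 * a / 2) * ζ₀ ^ 2 - ζ₁ * ζ₃ + a * ζ₁ ^ 2 := by
    linear_combination (hQ + sq_nonneg (2 * ζ₂ - α ^ 2 * ζ₀) / 2 + hR) / 6
  linear_combination mul_nonneg hc hT
end
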